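/- arXiv:1511.06034 — 2 statements merged into one kernel-verified Lean document; each statement's English description precedes it below -/
import Mathlib

section
/- Let r ≥ 2 and m ≥ 1 be integers and let C be the binary code of length (r+1)^m defined by the parity-check matrix H. Then for every α ∈ Z_{r+1}^m and every i ∈ {1,…,m}, the set L^{(i)}_α \ {α} is a repair set of α; concretely, for every codeword x ∈ C, x_α = ∑_{β ∈ L^{(i)}_α, β ≠ α} x_β (equivalently, ∑_{λ=0}^{r} x_{α[i:=λ]} = 0 over F_2, where α[i:=λ] denotes α with its i-th entry replaced by λ). -/
/-- `Z_r^m ⊆ Z_{r+1}^m`: the tuples all of whose entries are `< r`;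
`Lset r m α` is the set `L(α) = {μ ∈ Z_r^m : μ_j = α_j for all j ∈ T(α)}`,
where `T(α) = {j : α_j ≤ r-1}`. -/
def Lset (r m : ℕ) (α : Fin m → Fin (r + 1)) : Finset (Fin m → Fin (r + 1)) :=
  Finset.univ.filter fun μ =>
    (∀ j, (μ j : ℕ) < r) ∧ ∀ j, (α j : ℕ) < r → μ j = α j

/-- The binary code `C` with parity-check matrix `H`: all vectors
`x ∈ F_2^{Z_{r+1}^m}` with `x_α = ∑_{β ∈ L(α)} x_β` for every
`α ∈ Z_{r+1}^m \ Z_r^m`. -/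
def codeC (r m : ℕ) : Set ((Fin m → Fin (r + 1)) → ZMod 2) :=
  {x | ∀ α : Fin m → Fin (r + 1), ¬(∀ j, (α j : ℕ) < r) →
    x α = ∑ β ∈ Lset r m α, x β}

/-- `lineSet r m i α` is the axis-parallel line `L^{(i)}_α` through `α` in
direction `i`. -/
def lineSet (r m : ℕ) (i : Fin m) (α : Fin m → Fin (r + 1)) :
    Finset (Fin m → Fin (r + 1)) :=
  Finset.univ.filter fun μ => ∀ j, j ≠ i → μ j = α j

/-!
Every `x_β` equals `∑_{μ ∈ L(β)} x_μ`: for `β ∈ Z_r^m` because `L(β) = {β}`, otherwise by the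
parity check at `β`. On the line through `α` in direction `i` put `a = α[i:=r]`; for `λ < r` the
set `L(α[i:=λ])` is the slice `{μ ∈ L(a) : μ_i = λ}`. These slices partition `L(a)`, so
`∑_{λ<r} x_{α[i:=λ]} = ∑_{μ ∈ L(a)} x_μ = x_a`, and the whole line sums to `2 x_a = 0`.
-/

open Finset Function

section Line

variable {r m : ℕ}

lemma Lset_eq_singleton {β : Fin m → Fin (r + 1)} (hβ : ∀ j, (β j : ℕ) < r) :
    Lset r m β = {β} := by
  ext μ
  simp only [Lset, mem_filter, mem_univ, true_and, mem_singleton]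
  constructor
  · rintro ⟨-, hμ⟩
    exact funext fun j => hμ j (hβ j)
  · rintro rfl
    exact ⟨hβ, fun _ _ => rfl⟩

lemma Lset_update_of_lt (α : Fin m → Fin (r + 1)) (i : Fin m) {l : Fin (r + 1)}
    (hl : (l : ℕ) < r) :
    Lset r m (update α i l) = {μ ∈ Lset r m (update α i (Fin.last r)) | μ i = l} := by
  ext μ
  simp only [Lset, mem_filter, mem_univ, true_and, update_apply]
  constructor
  · rintro ⟨hμ, hfix⟩
    refine ⟨⟨hμ, fun j hj => ?_⟩, by simpa using hfix i (by simpa using hl)⟩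
    split_ifs at hj ⊢ with hji
    · simp at hj
    · simpa [hji] using hfix j (by simpa [hji] using hj)
  · rintro ⟨⟨hμ, hfix⟩, rfl⟩
    refine ⟨hμ, fun j hj => ?_⟩
    split_ifs at hj ⊢ with hji
    · rw [hji]
    · simpa [hji] using hfix j (by simpa [hji] using hj)

lemma lineSet_eq_image_update (α : Fin m → Fin (r + 1)) (i : Fin m) :
    lineSet r m i α = univ.image (update α i) := by
  ext μ
  simp only [lineSet, mem_filter, mem_univ, true_and, mem_image]
  constructor
  · intro hμ
    exact ⟨μ i, funext fun j => by
      rcases eq_or_ne j i with rfl | hj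
      · rw [update_self]
      · rw [update_of_ne hj, hμ j hj]⟩
  · rintro ⟨l, rfl⟩ j hj
    exact update_of_ne hj _ _

lemma sum_lineSet {M : Type*} [AddCommMonoid M] (α : Fin m → Fin (r + 1)) (i : Fin m)
    (f : (Fin m → Fin (r + 1)) → M) :
    ∑ β ∈ lineSet r m i α, f β = ∑ l, f (update α i l) := by
  rw [lineSet_eq_image_update, sum_image fun _ _ _ _ h => update_injective α i h]

end Line

section Code

variable {r m : ℕ} {x : (Fin m → Fin (r + 1)) → ZMod 2}

lemma apply_eq_sum_Lset (hx : x ∈ codeC r m) (β : Fin m → Fin (r + 1)) :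
    x β = ∑ μ ∈ Lset r m β, x μ := by
  by_cases hβ : ∀ j, (β j : ℕ) < r
  · rw [Lset_eq_singleton hβ, sum_singleton]
  · exact hx β hβ

lemma sum_update_eq_zero (hx : x ∈ codeC r m) (α : Fin m → Fin (r + 1)) (i : Fin m) :
    ∑ l, x (update α i l) = 0 := by
  set a := update α i (Fin.last r)
  have hslices : ∑ l : Fin r, x (update α i l.castSucc) = x a := by
    calc ∑ l : Fin r, x (update α i l.castSucc)
        = ∑ l : Fin r, ∑ μ ∈ Lset r m a with μ i = l.castSucc, x μ := by
          refine sum_congr rfl fun l _ => ?_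
          rw [apply_eq_sum_Lset hx, Lset_update_of_lt α i l.castSucc_lt_last]
      _ = ∑ l, ∑ μ ∈ Lset r m a with μ i = l, x μ := by
          rw [Fin.sum_univ_castSucc, left_eq_add, sum_eq_zero]
          intro μ hμ
          obtain ⟨⟨-, hμr, -⟩, hμi⟩ := mem_filter.1 hμ |>.imp_left mem_filter.1
          simpa [hμi] using hμr i
      _ = ∑ μ ∈ Lset r m a, x μ := sum_fiberwise _ _ _
      _ = x a := (apply_eq_sum_Lset hx a).symm
  rw [Fin.sum_univ_castSucc, hslices, CharTwo.add_self_eq_zero]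

end Code

theorem line_is_repair_set_general (r m : ℕ)
    (α : Fin m → Fin (r + 1)) (i : Fin m) :
    ∀ x ∈ codeC r m,
      x α = ∑ β ∈ (lineSet r m i α).erase α, x β ∧
      ∑ l : Fin (r + 1), x (Function.update α i l) = 0 := by
  intro x hx
  have hline := sum_update_eq_zero hx α i
  refine ⟨?_, hline⟩
  have hα : α ∈ lineSet r m i α := by simp [lineSet]
  rw [← CharTwo.add_eq_zero, add_sum_erase _ x hα, sum_lineSet, hline]

/-- For every `α` and every direction `i`, the punctured line
`L^{(i)}_α \ {α}` is a repair set of `α`: `x_α = ∑_{β ∈ L^{(i)}_α, β ≠ α} x_β`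
for all codewords, equivalently `∑_{λ=0}^{r} x_{α[i:=λ]} = 0` over `F_2`. -/
theorem line_is_repair_set (r m : ℕ) (hr : 2 ≤ r) (hm : 1 ≤ m)
    (α : Fin m → Fin (r + 1)) (i : Fin m) :
    ∀ x ∈ codeC r m,
      x α = ∑ β ∈ (lineSet r m i α).erase α, x β ∧
      ∑ l : Fin (r + 1), x (Function.update α i l) = 0 :=
  line_is_repair_set_general r m α i
end

section
/- Let F be a field, let C ⊆ F^n be a linear code, and let r, t be positive integers. Then C is (E,r)-repairable for every subset E ⊆ {1,…,n} with |E| ≤ t if and only if for every subset E ⊆ {1,…,n} with 1 ≤ |E| ≤ t there exists an index i ∈ E that has an (r,C)-repair set contained in {1,…,n} \ E. -/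
/-- `R` is an `(r, C)`-repair set of the coordinate `i`: `i ∉ R`, `|R| ≤ r`,
and there are coefficients `a_j`, independent of the codeword, with
`x_i = ∑_{j ∈ R} a_j x_j` for all `x ∈ C`. -/
def IsRepairSet {F : Type*} [Field F] {n : ℕ} (C : Submodule F (Fin n → F))
    (r : ℕ) (i : Fin n) (R : Finset (Fin n)) : Prop :=
  i ∉ R ∧ R.card ≤ r ∧ ∃ a : Fin n → F, ∀ x ∈ C, x i = ∑ j ∈ R, a j * x j

/-- `C` is `(E, r)`-repairable: the elements of `E` can be enumerated as
`i_1, …, i_s` so that each `i_ℓ` has an `(r, C)`-repair set contained in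
`([n] \ E) ∪ {i_1, …, i_{ℓ-1}}`. -/
def ERepairable {F : Type*} [Field F] {n : ℕ} (C : Submodule F (Fin n → F))
    (r : ℕ) (E : Finset (Fin n)) : Prop :=
  ∃ e : Fin E.card → Fin n, Function.Injective e ∧ (∀ ℓ, e ℓ ∈ E) ∧
    ∀ ℓ : Fin E.card, ∃ R : Finset (Fin n),
      (∀ j ∈ R, j ∉ E ∨ ∃ ℓ' : Fin E.card, ℓ' < ℓ ∧ e ℓ' = j) ∧
      IsRepairSet C r (e ℓ) R

/-!
Repairing the coordinates of `E` one at a time, the first one can only use coordinates outside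
`E`, which gives the forward direction. Conversely, if some `i ∈ E` is repairable from outside
`E`, repair `i` first: every coordinate of `E.erase i` then sees `i` as already repaired, so an
order for `E.erase i`, obtained by induction on `|E|`, extends to one for `E`.
-/

namespace ERepairable

variable {F : Type*} [Field F] {n : ℕ} {C : Submodule F (Fin n → F)} {r : ℕ}
  {E : Finset (Fin n)}

theorem of_enumeration {m : ℕ} (hm : E.card = m) (e : Fin m → Fin n)
    (he : Function.Injective e) (hmem : ∀ ℓ, e ℓ ∈ E)
    (hrep : ∀ ℓ, ∃ R : Finset (Fin n),
      (∀ j ∈ R, j ∉ E ∨ ∃ ℓ', ℓ' < ℓ ∧ e ℓ' = j) ∧ IsRepairSet C r (e ℓ) R) :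
    ERepairable C r E := by
  subst hm
  exact ⟨e, he, hmem, hrep⟩

theorem empty : ERepairable C r (∅ : Finset (Fin n)) :=
  of_enumeration (m := 0) rfl Fin.elim0 (Function.injective_of_subsingleton _)
    (fun ℓ => ℓ.elim0) fun ℓ => ℓ.elim0

theorem exists_repair_set_outside (h : ERepairable C r E) (hE : 0 < E.card) :
    ∃ i ∈ E, ∃ R : Finset (Fin n), (∀ j ∈ R, j ∉ E) ∧ IsRepairSet C r i R := by
  obtain ⟨e, -, hmem, hrep⟩ := h
  obtain ⟨R, hR, hrepair⟩ := hrep ⟨0, hE⟩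
  refine ⟨e ⟨0, hE⟩, hmem _, R, fun j hj => ?_, hrepair⟩
  rcases hR j hj with hjE | ⟨ℓ', hℓ', -⟩
  · exact hjE
  · exact absurd hℓ' (Nat.not_lt_zero _)

theorem of_erase {i : Fin n} {R : Finset (Fin n)} (hi : i ∈ E) (hRE : ∀ j ∈ R, j ∉ E)
    (hR : IsRepairSet C r i R) (h : ERepairable C r (E.erase i)) : ERepairable C r E := by
  obtain ⟨e, he, hmem, hrep⟩ := h
  have hi_range : i ∉ Set.range e := by
    rintro ⟨ℓ, hℓ⟩
    exact Finset.notMem_erase i E (hℓ ▸ hmem ℓ)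
  refine of_enumeration (Finset.card_erase_add_one hi).symm (Fin.cons i e)
    (Fin.cons_injective_iff.mpr ⟨hi_range, he⟩)
    (Fin.cases hi fun ℓ => Finset.mem_of_mem_erase (hmem ℓ))
    (Fin.cases ⟨R, fun j hj => Or.inl (hRE j hj), hR⟩ fun ℓ => ?_)
  obtain ⟨R', hR', hrepair⟩ := hrep ℓ
  refine ⟨R', fun j hj => ?_, hrepair⟩
  rcases hR' j hj with hj_erase | ⟨ℓ', hℓ', rfl⟩
  · by_cases hji : j = i
    · exact Or.inr ⟨0, Fin.succ_pos ℓ, hji.symm⟩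
    · exact Or.inl fun hjE => hj_erase (Finset.mem_erase.mpr ⟨hji, hjE⟩)
  · exact Or.inr ⟨ℓ'.succ, Fin.succ_lt_succ_iff.mpr hℓ', rfl⟩

end ERepairable

theorem eRepairable_iff_exists_repair_set_outside_general {F : Type*} [Field F] {n : ℕ}
    (C : Submodule F (Fin n → F)) (r t : ℕ) :
    (∀ E : Finset (Fin n), E.card ≤ t → ERepairable C r E) ↔
    (∀ E : Finset (Fin n), 0 < E.card → E.card ≤ t →
      ∃ i ∈ E, ∃ R : Finset (Fin n), (∀ j ∈ R, j ∉ E) ∧ IsRepairSet C r i R) := by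
  refine ⟨fun h E hE hEt => (h E hEt).exists_repair_set_outside hE, fun h E => ?_⟩
  induction E using Finset.strongInduction with
  | H E ih =>
    intro hEt
    rcases E.eq_empty_or_nonempty with rfl | hne
    · exact ERepairable.empty
    obtain ⟨i, hi, R, hRE, hR⟩ := h E hne.card_pos hEt
    exact ERepairable.of_erase hi hRE hR <|
      ih _ (Finset.erase_ssubset hi) ((Finset.card_erase_le).trans hEt)

/-- A linear code `C` is `(E, r)`-repairable for every `E` with `|E| ≤ t` iff
for every nonempty `E` with `|E| ≤ t` some `i ∈ E` has an `(r, C)`-repair set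
contained in the complement of `E`. -/
theorem eRepairable_iff_exists_repair_set_outside {F : Type*} [Field F] {n : ℕ}
    (C : Submodule F (Fin n → F)) (r t : ℕ) (hr : 0 < r) (ht : 0 < t) :
    (∀ E : Finset (Fin n), E.card ≤ t → ERepairable C r E) ↔
    (∀ E : Finset (Fin n), 0 < E.card → E.card ≤ t →
      ∃ i ∈ E, ∃ R : Finset (Fin n), (∀ j ∈ R, j ∉ E) ∧ IsRepairSet C r i R) :=
  eRepairable_iff_exists_repair_set_outside_general C r t
end
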